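/- Let a, b ∈ ℕ with [a,b] ∉ S₂. If F ∈ full_{a,b}(S₂), then E₁(F), E₂(F), ..., E_{a-1}(F) are all full Schreier sets. -/

import Mathlib

open Finset

/-- `F < G` for finite sets: every element of `F` is below every element of `G`. -/
def FinsetLT (F G : Finset ℕ) : Prop := ∀ x ∈ F, ∀ y ∈ G, x < y

/-- Membership in the Schreier family `S₁`: a finite set of positive integers
with `|F| ≤ min F` (the empty set belongs trivially). -/
def IsSchreier (F : Finset ℕ) : Prop := ∀ n ∈ F, 0 < n ∧ F.card ≤ n

/-- `F` is a union of at most `d` sets `F₁ < F₂ < ⋯`, each in the family `P`. -/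
def Combine (P : Finset ℕ → Prop) (d : ℕ) (F : Finset ℕ) : Prop :=
  ∃ L : List (Finset ℕ), L.length ≤ d ∧ L.Pairwise FinsetLT ∧
    (∀ G ∈ L, P G) ∧ L.foldr (· ∪ ·) ∅ = F

/-- Membership in `S₂`. -/
def MemS2 (F : Finset ℕ) : Prop :=
  F = ∅ ∨ ∃ h : F.Nonempty, Combine IsSchreier (F.min' h) F

/-- Membership in `S₃`. -/
def MemS3 (F : Finset ℕ) : Prop :=
  F = ∅ ∨ ∃ h : F.Nonempty, Combine MemS2 (F.min' h) F

/-- `F` is a maximal member of the family `P` (among sets of positive integers). -/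
def IsFull (P : Finset ℕ → Prop) (F : Finset ℕ) : Prop :=
  P F ∧ ∀ n : ℕ, 0 < n → n ∉ F → ¬ P (insert n F)

/-- `F ∈ full_{a,b}(P)`. -/
def FullAB (P : Finset ℕ → Prop) (a b : ℕ) (F : Finset ℕ) : Prop :=
  P F ∧ F ⊆ Finset.Icc a b ∧ a ∈ F ∧
    ∀ n ∈ Finset.Icc a b, n ∉ F → ¬ P (insert n F)

/-- The tower function `τ`. -/
def tau : ℕ → ℕ → ℕ
  | 0, a => a
  | i + 1, a => 2 ^ tau i a

/-- `E₁(F)`: `F` itself if `|F| ≤ min F`, otherwise the `min F` smallest elements of `F`. -/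
def E1 (F : Finset ℕ) : Finset ℕ :=
  if h : F.Nonempty then ((F.sort (· ≤ ·)).take (F.min' h)).toFinset else ∅

/-- Union of the first `i` greedy pieces. -/
def Eacc : ℕ → Finset ℕ → Finset ℕ
  | 0, _ => ∅
  | i + 1, F => Eacc i F ∪ E1 (F \ Eacc i F)

/-- The `i`-th greedy piece `E_i(F)` (for `i ≥ 1`). -/
def Epiece (i : ℕ) (F : Finset ℕ) : Finset ℕ := E1 (F \ Eacc (i - 1) F)

open Classical in
/-- `E₁*(F)`: `F` itself if `F ∈ S₂`, otherwise `E₁(F) ∪ ⋯ ∪ E_{min F}(F)`. -/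
noncomputable def E1star (F : Finset ℕ) : Finset ℕ :=
  if MemS2 F then F
  else if h : F.Nonempty then Eacc (F.min' h) F else ∅

/-- Union of the first `i` starred greedy pieces. -/
noncomputable def EaccStar : ℕ → Finset ℕ → Finset ℕ
  | 0, _ => ∅
  | i + 1, F => EaccStar i F ∪ E1star (F \ EaccStar i F)

/-- The `i`-th starred greedy piece `E_i*(F)` (for `i ≥ 1`). -/
noncomputable def EpieceStar (i : ℕ) (F : Finset ℕ) : Finset ℕ :=
  E1star (F \ EaccStar (i - 1) F)


/-!
If some `E_i(F)` with `1 ≤ i ≤ a - 1` is not a full Schreier set, then the greedy decomposition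
has already exhausted `F` after `i` pieces, so `F` is a union of `i ≤ a - 1` successive Schreier
sets. As `[a, b] ∉ S₂`, some `n ∈ [a, b]` is missing from `F`. Adding `n` costs at most one extra
piece: split the piece whose range contains `n` at `n`, putting `n` into its lower half. Hence
`F ∪ {n}` is a union of at most `a = min (F ∪ {n})` successive Schreier sets, so it lies in `S₂`,
contradicting the maximality of `F`.
-/

lemma IsSchreier.mono {F G : Finset ℕ} (hG : IsSchreier G) (hFG : F ⊆ G) : IsSchreier F :=
  fun x hx => ⟨(hG x (hFG hx)).1, (card_le_card hFG).trans (hG x (hFG hx)).2⟩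

lemma IsSchreier.insert_filter_lt {G : Finset ℕ} {n v : ℕ} (hG : IsSchreier G) (hn : 0 < n)
    (hv : v ∈ G) (hnv : n ≤ v) : IsSchreier (insert n (G.filter (· < n))) := by
  have hcard : #(insert n (G.filter (· < n))) ≤ #G :=
    (card_insert_le _ _).trans (card_lt_card (filter_ssubset.2 ⟨v, hv, by omega⟩))
  intro x hx
  rcases mem_insert.1 hx with rfl | hx
  · have hsub : insert x (G.filter (· < x)) ⊆ Icc 1 x := by
      refine insert_subset (mem_Icc.2 ⟨hn, le_rfl⟩) fun y hy => ?_
      obtain ⟨hyG, hyx⟩ := mem_filter.1 hy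
      exact mem_Icc.2 ⟨(hG y hyG).1, hyx.le⟩
    exact ⟨hn, by simpa using card_le_card hsub⟩
  · have hxG := (hG x (mem_filter.1 hx).1)
    exact ⟨hxG.1, hcard.trans hxG.2⟩

lemma Combine.mono {P : Finset ℕ → Prop} {d d' : ℕ} {F : Finset ℕ} (h : Combine P d F)
    (hdd' : d ≤ d') : Combine P d' F :=
  let ⟨L, hlen, hL⟩ := h
  ⟨L, hlen.trans hdd', hL⟩

lemma mem_foldr_union {L : List (Finset ℕ)} {y : ℕ} :
    y ∈ L.foldr (· ∪ ·) ∅ ↔ ∃ G ∈ L, y ∈ G := by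
  induction L with
  | nil => simp
  | cons G L ih => simp [ih]

section InsertPiece

/-- If `n` lies below every element of `G`, the split yields `{n} :: G :: L`. -/
def insertPiece (n : ℕ) : List (Finset ℕ) → List (Finset ℕ)
  | [] => [{n}]
  | G :: L =>
    if ∀ x ∈ G, x < n then G :: insertPiece n L
    else insert n (G.filter (· < n)) :: G.filter (n < ·) :: L

variable (n : ℕ)

lemma length_insertPiece_le (L : List (Finset ℕ)) :
    (insertPiece n L).length ≤ L.length + 1 := by
  induction L with
  | nil => simp [insertPiece]
  | cons G L ih =>
    rw [insertPiece]
    split_ifs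
    · simpa using ih
    · simp

lemma foldr_union_insertPiece (L : List (Finset ℕ)) :
    (insertPiece n L).foldr (· ∪ ·) ∅ = insert n (L.foldr (· ∪ ·) ∅) := by
  induction L with
  | nil => simp [insertPiece]
  | cons G L ih =>
    rw [insertPiece]
    split_ifs
    · simp only [List.foldr_cons, ih, union_insert]
    · ext x
      simp only [List.foldr_cons, mem_union, mem_insert, mem_filter]
      grind

lemma pairwise_insertPiece {L : List (Finset ℕ)} (hL : L.Pairwise FinsetLT) :
    (insertPiece n L).Pairwise FinsetLT := by
  induction L with
  | nil => simp [insertPiece]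
  | cons G L ih =>
    obtain ⟨hGL, hL⟩ := List.pairwise_cons.1 hL
    rw [insertPiece]
    split_ifs with hGn
    · refine List.pairwise_cons.2 ⟨fun H hH x hx y hy => ?_, ih hL⟩
      have hy' : y ∈ insert n (L.foldr (· ∪ ·) ∅) := by
        rw [← foldr_union_insertPiece, mem_foldr_union]
        exact ⟨H, hH, hy⟩
      rcases mem_insert.1 hy' with rfl | hy'
      · exact hGn x hx
      · obtain ⟨H', hH', hyH'⟩ := mem_foldr_union.1 hy'
        exact hGL H' hH' x hx y hyH'
    · obtain ⟨v, hvG, hnv⟩ : ∃ v ∈ G, n ≤ v := by simpa using hGn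
      have hlow : ∀ x ∈ insert n (G.filter (· < n)), x ≤ v := by
        intro x hx
        rcases mem_insert.1 hx with rfl | hx
        · exact hnv
        · exact ((mem_filter.1 hx).2.trans_le hnv).le
      refine List.pairwise_cons.2 ⟨fun H hH x hx y hy => ?_,
        List.pairwise_cons.2 ⟨fun H hH x hx => hGL H hH x (mem_filter.1 hx).1, hL⟩⟩
      rcases List.mem_cons.1 hH with rfl | hH
      · have hny := (mem_filter.1 hy).2
        rcases mem_insert.1 hx with rfl | hx
        · exact hny
        · exact (mem_filter.1 hx).2.trans hny
      · exact (hlow x hx).trans_lt (hGL H hH v hvG y hy)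

lemma isSchreier_of_mem_insertPiece {L : List (Finset ℕ)} (hn : 0 < n)
    (hL : ∀ G ∈ L, IsSchreier G) : ∀ H ∈ insertPiece n L, IsSchreier H := by
  induction L with
  | nil =>
    simp only [insertPiece, List.mem_singleton, forall_eq]
    intro x hx
    rw [mem_singleton.1 hx, card_singleton]
    exact ⟨hn, hn⟩
  | cons G L ih =>
    have hG := hL G List.mem_cons_self
    rw [insertPiece]
    split_ifs with hGn
    · simp only [List.mem_cons, forall_eq_or_imp]
      exact ⟨hG, ih fun G' hG' => hL G' (List.mem_cons_of_mem _ hG')⟩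
    · obtain ⟨v, hvG, hnv⟩ : ∃ v ∈ G, n ≤ v := by simpa using hGn
      simp only [List.mem_cons, forall_eq_or_imp]
      exact ⟨hG.insert_filter_lt hn hvG hnv, hG.mono (filter_subset _ _),
        fun H hH => hL H (List.mem_cons_of_mem _ hH)⟩

end InsertPiece

lemma Combine.insert {d : ℕ} {F : Finset ℕ} {n : ℕ} (h : Combine IsSchreier d F) (hn : 0 < n) :
    Combine IsSchreier (d + 1) (insert n F) := by
  obtain ⟨L, hlen, hpw, hS, rfl⟩ := h
  exact ⟨insertPiece n L, (length_insertPiece_le n L).trans (by omega), pairwise_insertPiece n hpw,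
    isSchreier_of_mem_insertPiece n hn hS, foldr_union_insertPiece n L⟩

section E1

variable {G : Finset ℕ}

lemma E1_subset (G : Finset ℕ) : E1 G ⊆ G := by
  unfold E1
  split
  · intro x hx
    exact (mem_sort _).1 (List.mem_of_mem_take (List.mem_toFinset.1 hx))
  · exact empty_subset G

lemma card_E1 (h : G.Nonempty) : #(E1 G) = min (G.min' h) #G := by
  unfold E1
  rw [dif_pos h,
    List.toFinset_card_of_nodup ((sort_nodup _ _).sublist (List.take_sublist _ _)),
    List.length_take, length_sort]

lemma lt_of_mem_E1 {x y : ℕ} (hx : x ∈ E1 G) (hy : y ∈ G \ E1 G) : x < y := by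
  obtain ⟨hyG, hyE⟩ := mem_sdiff.1 hy
  have h : G.Nonempty := ⟨y, hyG⟩
  unfold E1 at hx hyE
  rw [dif_pos h, List.mem_toFinset] at hx hyE
  have hsorted := (sortedLT_sort G).pairwise
  rw [← List.take_append_drop (G.min' h) (G.sort (· ≤ ·))] at hsorted
  refine (List.pairwise_append.1 hsorted).2.2 x hx y ?_
  have hy' := (mem_sort (· ≤ ·)).2 hyG
  rw [← List.take_append_drop (G.min' h) (G.sort (· ≤ ·)), List.mem_append] at hy'
  exact hy'.resolve_left hyE

lemma isSchreier_E1 (hpos : ∀ x ∈ G, 0 < x) : IsSchreier (E1 G) := by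
  intro x hx
  have hxG := E1_subset G hx
  have hG : G.Nonempty := ⟨x, hxG⟩
  refine ⟨hpos x hxG, ?_⟩
  calc #(E1 G) ≤ G.min' hG := by rw [card_E1 hG]; exact min_le_left _ _
    _ ≤ x := G.min'_le x hxG

lemma isFull_E1 (hpos : ∀ x ∈ G, 0 < x) (hrem : (G \ E1 G).Nonempty) :
    IsFull IsSchreier (E1 G) := by
  obtain ⟨y, hy⟩ := hrem
  have hG : G.Nonempty := ⟨y, (mem_sdiff.1 hy).1⟩
  set m := G.min' hG
  have hcard : #(E1 G) = m := by
    rw [card_E1 hG]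
    refine min_eq_left (not_lt.1 fun hGm => (mem_sdiff.1 hy).2 ?_)
    rw [eq_of_subset_of_card_le (E1_subset G) (by rw [card_E1 hG]; omega)]
    exact (mem_sdiff.1 hy).1
  -- `E1 G` consists of the `m` smallest elements of `G`, so it contains `m` itself
  have hm : m ∈ E1 G := by
    obtain ⟨x, hx⟩ := card_pos.1 (hcard ▸ hpos m (G.min'_mem hG))
    by_contra hmE
    exact (lt_of_mem_E1 hx (mem_sdiff.2 ⟨G.min'_mem hG, hmE⟩)).not_ge
      (G.min'_le x (E1_subset G hx))
  refine ⟨isSchreier_E1 hpos, fun n _ hn hins => ?_⟩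
  have := (hins m (mem_insert_of_mem hm)).2
  rw [card_insert_of_notMem hn, hcard] at this
  omega

end E1

section Eacc

variable {F : Finset ℕ}

lemma Eacc_subset (i : ℕ) (F : Finset ℕ) : Eacc i F ⊆ F := by
  induction i with
  | zero => exact empty_subset F
  | succ i ih => exact union_subset ih ((E1_subset _).trans sdiff_subset)

lemma Eacc_monotone (F : Finset ℕ) : Monotone (Eacc · F) :=
  monotone_nat_of_le_succ fun _ => subset_union_left

lemma sdiff_Eacc_succ (i : ℕ) (F : Finset ℕ) :
    F \ Eacc (i + 1) F = (F \ Eacc i F) \ E1 (F \ Eacc i F) :=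
  (sdiff_sdiff_left ..).symm

lemma mem_Eacc {i x : ℕ} : x ∈ Eacc i F ↔ ∃ j < i, x ∈ E1 (F \ Eacc j F) := by
  induction i with
  | zero => simp [Eacc]
  | succ i ih => simp only [Eacc, mem_union, ih, Nat.lt_add_one_iff_lt_or_eq, or_and_right, exists_or,
      exists_eq_left]

lemma Epiece_isFull (hpos : ∀ x ∈ F, 0 < x) {i : ℕ} (hi : 1 ≤ i)
    (hrem : (F \ Eacc i F).Nonempty) : IsFull IsSchreier (Epiece i F) := by
  obtain ⟨j, rfl⟩ := Nat.exists_eq_add_of_le' hi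
  rw [sdiff_Eacc_succ] at hrem
  exact isFull_E1 (fun x hx => hpos x (mem_sdiff.1 hx).1) hrem

lemma finsetLT_E1_sdiff_Eacc {j k : ℕ} (hjk : j < k) :
    FinsetLT (E1 (F \ Eacc j F)) (E1 (F \ Eacc k F)) := by
  intro x hx y hy
  refine lt_of_mem_E1 hx ?_
  rw [← sdiff_Eacc_succ]
  exact sdiff_subset_sdiff subset_rfl (Eacc_monotone F hjk) (E1_subset _ hy)

lemma combine_Eacc (hpos : ∀ x ∈ F, 0 < x) (i : ℕ) : Combine IsSchreier i (Eacc i F) := by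
  refine ⟨(List.range i).map fun j => E1 (F \ Eacc j F), by simp,
    List.pairwise_map.2 (List.pairwise_lt_range.imp finsetLT_E1_sdiff_Eacc), ?_, ?_⟩
  · simp only [List.mem_map, List.mem_range, forall_exists_index, and_imp]
    rintro _ j - rfl
    exact isSchreier_E1 fun x hx => hpos x (mem_sdiff.1 hx).1
  · ext x
    simp [mem_foldr_union, mem_Eacc]

end Eacc

theorem stmt16 (a b : ℕ) (hab : ¬ MemS2 (Finset.Icc a b))
    (F : Finset ℕ) (hF : FullAB MemS2 a b F) :
    ∀ i, 1 ≤ i → i ≤ a - 1 → IsFull IsSchreier (Epiece i F) := by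
  obtain ⟨hFS2, hFab, haF, hmax⟩ := hF
  intro i hi hia
  have hge : ∀ x ∈ F, a ≤ x := fun x hx => (mem_Icc.1 (hFab hx)).1
  have hpos : ∀ x ∈ F, 0 < x := fun x hx => by have := hge x hx; omega
  by_contra hnot
  have hexhausted : Eacc i F = F :=
    (Eacc_subset i F).antisymm <| sdiff_eq_empty_iff_subset.1 <|
      not_nonempty_iff_eq_empty.1 (mt (Epiece_isFull hpos hi) hnot)
  obtain ⟨n, hn, hnF⟩ := exists_of_ssubset (hFab.ssubset_of_ne fun h => hab (h ▸ hFS2))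
  have hna := (mem_Icc.1 hn).1
  refine hmax n hn hnF (Or.inr ⟨insert_nonempty n F, ?_⟩)
  have hmin : (insert n F).min' (insert_nonempty n F) = a :=
    le_antisymm (min'_le _ _ (mem_insert_of_mem haF))
      (le_min' _ _ _ fun y hy => (mem_insert.1 hy).elim (· ▸ hna) (hge y))
  rw [hmin, ← hexhausted]
  exact ((combine_Eacc hpos i).insert (by omega)).mono (by omega)
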